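/- For k ∈ (1/√2, 1) and L > 0, the quantity D₁ = −(L(2k²−1)/K(k))·(2E(k) − K(k)) satisfies: D₁ < 0 for k ∈ (1/√2, k*), D₁ = 0 at k = k*, and D₁ > 0 for k ∈ (k*, 1), where k* is the unique zero of 2E(k) − K(k) in (1/√2, 1). -/
import Mathlib


open Real

/-- The complete elliptic integral of the first kind. -/
noncomputable def ellK (k : ℝ) : ℝ :=
  ∫ θ in (0:ℝ)..(π / 2), 1 / Real.sqrt (1 - k ^ 2 * Real.sin θ ^ 2)

/-- The complete elliptic integral of the second kind. -/
noncomputable def ellE (k : ℝ) : ℝ :=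
  ∫ θ in (0:ℝ)..(π / 2), Real.sqrt (1 - k ^ 2 * Real.sin θ ^ 2)

lemma ellK_pos {k : ℝ} (hk1 : k < 1) (hk0 : 0 < k) : 0 < ellK k := by
  have h1 : ∀ θ : ℝ, 0 < 1 - k ^ 2 * Real.sin θ ^ 2 := by
    intro θ
    nlinarith [Real.sin_sq_le_one θ, sq_nonneg (Real.sin θ), sq_nonneg k]
  have hcont : Continuous fun θ : ℝ => 1 / Real.sqrt (1 - k ^ 2 * Real.sin θ ^ 2) := by
    apply Continuous.div continuous_const
    · exact Real.continuous_sqrt.comp (by continuity)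
    · intro θ
      exact ne_of_gt (Real.sqrt_pos.mpr (h1 θ))
  apply intervalIntegral.intervalIntegral_pos_of_pos (f := fun θ : ℝ =>
      1 / Real.sqrt (1 - k ^ 2 * Real.sin θ ^ 2))
  · exact hcont.intervalIntegrable 0 (π / 2)
  · intro x
    exact div_pos one_pos (Real.sqrt_pos.mpr (h1 x))
  · positivity

theorem sign_of_D1
    (L : ℝ) (hL : 0 < L)
    (hanti : StrictAntiOn (fun k : ℝ => 2 * ellE k - ellK k) (Set.Ioo 0 1))
    (kstar : ℝ) (hkstar : kstar ∈ Set.Ioo (1 / Real.sqrt 2) 1)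
    (hzero : 2 * ellE kstar - ellK kstar = 0)
    (huniq : ∀ k ∈ Set.Ioo (1 / Real.sqrt 2) 1,
        2 * ellE k - ellK k = 0 → k = kstar) :
    (∀ k ∈ Set.Ioo (1 / Real.sqrt 2) kstar,
        -(L * (2 * k ^ 2 - 1) / ellK k) * (2 * ellE k - ellK k) < 0)
      ∧ -(L * (2 * kstar ^ 2 - 1) / ellK kstar) * (2 * ellE kstar - ellK kstar) = 0
      ∧ ∀ k ∈ Set.Ioo kstar 1,
          0 < -(L * (2 * k ^ 2 - 1) / ellK k) * (2 * ellE k - ellK k) := by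
  have hs2 : (Real.sqrt 2) ^ 2 = 2 := Real.sq_sqrt (by norm_num)
  have hspos : 0 < 1 / Real.sqrt 2 := by positivity
  have hfac : ∀ k : ℝ, 1 / Real.sqrt 2 < k → k < 1 →
      0 < L * (2 * k ^ 2 - 1) / ellK k := by
    intro k hk1 hk2
    have hk0 : 0 < k := lt_trans hspos hk1
    have hsqrt2pos : 0 < Real.sqrt 2 := Real.sqrt_pos.mpr (by norm_num)
    have hk2' : 0 < 2 * k ^ 2 - 1 := by
      have h : 1 < k * Real.sqrt 2 := by
        rw [div_lt_iff₀ hsqrt2pos] at hk1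
        linarith
      nlinarith
    exact div_pos (mul_pos hL hk2') (ellK_pos hk2 hk0)
  obtain ⟨hks1, hks2⟩ := hkstar
  have hkstarI : kstar ∈ Set.Ioo (0:ℝ) 1 := ⟨lt_trans hspos hks1, hks2⟩
  refine ⟨?_, ?_, ?_⟩
  · intro k ⟨hk1, hk2⟩
    have hkI : k ∈ Set.Ioo (0:ℝ) 1 := ⟨lt_trans hspos hk1, lt_trans hk2 hks2⟩
    have hpos : 0 < 2 * ellE k - ellK k := by
      have := hanti hkI hkstarI hk2
      simpa [hzero] using this
    have := mul_pos (hfac k hk1 hkI.2) hpos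
    rw [neg_mul]
    linarith
  · rw [hzero, mul_zero]
  · intro k ⟨hk1, hk2⟩
    have hkI : k ∈ Set.Ioo (0:ℝ) 1 := ⟨lt_trans hkstarI.1 hk1, hk2⟩
    have hneg : 2 * ellE k - ellK k < 0 := by
      have := hanti hkstarI hkI hk1
      simpa [hzero] using this
    have := mul_pos (hfac k (lt_trans hks1 hk1) hk2) (neg_pos.mpr hneg)
    rw [neg_mul]
    nlinarith
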